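/- The function x ↦ log Φ(√x) is concave on (0, ∞), where Φ is the standard normal cumulative distribution function. -/

import Mathlib

noncomputable section

open MeasureTheory Real Set Filter

/-- standard normal pdf φ -/
def stdPdf (x : ℝ) : ℝ := (Real.sqrt (2 * Real.pi))⁻¹ * Real.exp (-(x ^ 2) / 2)

/-- standard normal cdf Φ -/
def stdCdf (x : ℝ) : ℝ := ∫ t in Set.Iic x, stdPdf t

/-- posterior expected reward  E[r ‖ x] = ∫ r(v) φ((v-μ_x)/σ_v)/σ_v dv, where
    μ_x = τ x + (1-τ) θ, τ = σθ²/(σε²+σθ²), σ_v = σε σθ / √(σε²+σθ²). -/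
def postReward (θ σε σθ : ℝ) (r : ℝ → ℝ) (x : ℝ) : ℝ :=
  ∫ v, r v * stdPdf ((v - (σθ ^ 2 / (σε ^ 2 + σθ ^ 2) * x +
      (1 - σθ ^ 2 / (σε ^ 2 + σθ ^ 2)) * θ)) / (σε * σθ / Real.sqrt (σε ^ 2 + σθ ^ 2))) /
    (σε * σθ / Real.sqrt (σε ^ 2 + σθ ^ 2))

/-- expected profit  Π(p, r, c) = ∫ (p - r(v)) Φ((v-c)/σε) φ((θ-v)/σθ)/σθ dv. -/
def profit (θ σε σθ : ℝ) (p : ℝ) (r : ℝ → ℝ) (c : ℝ) : ℝ :=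
  ∫ v, (p - r v) * stdCdf ((v - c) / σε) * stdPdf ((θ - v) / σθ) / σθ


lemma stdPdf_eq (x : ℝ) : stdPdf x = (Real.sqrt (2 * Real.pi))⁻¹ * Real.exp (-(2⁻¹) * x ^ 2) := by
  simp [stdPdf, neg_div, div_eq_inv_mul, mul_comm]

lemma stdPdf_pos (x : ℝ) : 0 < stdPdf x :=
  mul_pos (inv_pos.2 (Real.sqrt_pos.2 (by positivity))) (Real.exp_pos _)

lemma continuous_stdPdf : Continuous stdPdf := by
  unfold stdPdf; fun_prop

lemma integrable_stdPdf : Integrable stdPdf := by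
  simp only [funext stdPdf_eq]
  exact (integrable_exp_neg_mul_sq (by norm_num)).const_mul _

lemma integrable_mul_stdPdf : Integrable (fun t => t * stdPdf t) := by
  have := (integrable_mul_exp_neg_mul_sq (b := 2⁻¹) (by norm_num)).const_mul
    (Real.sqrt (2 * Real.pi))⁻¹
  apply this.congr
  filter_upwards with t
  rw [stdPdf_eq]; ring

lemma hasDerivAt_stdPdf (x : ℝ) : HasDerivAt stdPdf (-x * stdPdf x) x := by
  have h : HasDerivAt (fun t : ℝ => -(t ^ 2) / 2) (-x) x := by
    have := ((hasDerivAt_pow 2 x).neg).div_const 2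
    refine this.congr_deriv ?_
    norm_num; ring
  have := (h.exp).const_mul (Real.sqrt (2 * Real.pi))⁻¹
  refine this.congr_deriv ?_
  simp only [stdPdf, neg_div]
  ring

lemma stdCdf_eq (y : ℝ) : stdCdf y = (∫ t in Set.Iic 0, stdPdf t) + ∫ t in (0:ℝ)..y, stdPdf t := by
  rw [← intervalIntegral.integral_Iic_sub_Iic integrable_stdPdf.integrableOn
    integrable_stdPdf.integrableOn]
  simp [stdCdf]

lemma hasDerivAt_stdCdf (x : ℝ) : HasDerivAt stdCdf (stdPdf x) x := by
  have := ((continuous_stdPdf.integral_hasStrictDerivAt 0 x).hasDerivAt).const_add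
    (∫ t in Set.Iic 0, stdPdf t)
  exact this.congr_of_eventuallyEq (Eventually.of_forall fun y => (stdCdf_eq y))

lemma stdCdf_pos (x : ℝ) : 0 < stdCdf x := by
  have h1 : stdCdf x = stdCdf (x-1) + ∫ t in (x-1)..x, stdPdf t := by
    rw [← intervalIntegral.integral_Iic_sub_Iic integrable_stdPdf.integrableOn
      integrable_stdPdf.integrableOn]
    simp [stdCdf]
  have h2 : 0 < ∫ t in (x-1)..x, stdPdf t :=
    intervalIntegral.intervalIntegral_pos_of_pos
      (continuous_stdPdf.intervalIntegrable _ _) (fun t => stdPdf_pos t) (by linarith)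
  have h3 : 0 ≤ stdCdf (x-1) :=
    setIntegral_nonneg measurableSet_Iic (fun t _ => (stdPdf_pos t).le)
  linarith

lemma tendsto_stdPdf_atBot : Tendsto stdPdf atBot (nhds 0) := by
  have hsq : Tendsto (fun x : ℝ => x ^ 2) atBot atTop := by
    have habs : Tendsto (fun x : ℝ => |x|) atBot atTop := tendsto_abs_atBot_atTop
    have hp : Tendsto (fun y : ℝ => y ^ 2) atTop atTop := tendsto_pow_atTop two_ne_zero
    have := hp.comp habs
    simpa only [Function.comp_def, sq_abs] using this
  have h1 : Tendsto (fun x : ℝ => -(x ^ 2) / 2) atBot atBot := by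
    apply Tendsto.atBot_div_const (by norm_num)
    exact tendsto_neg_atBot_iff.mpr hsq
  have h2 : Tendsto (fun x : ℝ => Real.exp (-(x ^ 2) / 2)) atBot (nhds 0) :=
    Real.tendsto_exp_atBot.comp h1
  have := h2.const_mul (Real.sqrt (2 * Real.pi))⁻¹
  simp only [mul_zero] at this
  exact this

lemma integral_mul_stdPdf (x : ℝ) : ∫ t in Set.Iic x, t * stdPdf t = -stdPdf x := by
  have h := integral_Iic_of_hasDerivAt_of_tendsto (f := fun t => -stdPdf t)
    (f' := fun t => t * stdPdf t) (a := x) (m := 0) ?_ ?_ ?_ ?_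
  · rw [h]; ring
  · exact (continuous_stdPdf.neg).continuousWithinAt
  · intro t ht
    have := (hasDerivAt_stdPdf t).neg
    exact this.congr_deriv (by ring)
  · exact integrable_mul_stdPdf.integrableOn
  · simpa using (tendsto_stdPdf_atBot).neg

lemma stdCdf_le_of_neg {x : ℝ} (hx : x < 0) : stdCdf x ≤ x⁻¹ * (-stdPdf x) := by
  have hmono : stdCdf x ≤ ∫ t in Set.Iic x, x⁻¹ * (t * stdPdf t) := by
    apply setIntegral_mono_on integrable_stdPdf.integrableOn
      ((integrable_mul_stdPdf.const_mul x⁻¹).integrableOn) measurableSet_Iic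
    intro t ht
    have ht' : t ≤ x := ht
    have h1 : (1 : ℝ) ≤ x⁻¹ * t := by
      rw [← inv_mul_cancel₀ hx.ne]
      exact mul_le_mul_of_nonpos_left ht' (inv_nonpos.2 hx.le)
    calc stdPdf t = 1 * stdPdf t := (one_mul _).symm
      _ ≤ (x⁻¹ * t) * stdPdf t := by
          exact mul_le_mul_of_nonneg_right h1 (stdPdf_pos t).le
      _ = x⁻¹ * (t * stdPdf t) := by ring
  calc stdCdf x ≤ ∫ t in Set.Iic x, x⁻¹ * (t * stdPdf t) := hmono
    _ = x⁻¹ * ∫ t in Set.Iic x, t * stdPdf t := integral_const_mul _ _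
    _ = x⁻¹ * (-stdPdf x) := by rw [integral_mul_stdPdf]

lemma key_ineq (x : ℝ) : 0 ≤ x * stdCdf x + stdPdf x := by
  rcases le_or_gt 0 x with hx | hx
  · have := stdCdf_pos x
    have := stdPdf_pos x
    nlinarith
  · have h := stdCdf_le_of_neg hx
    have : x * stdCdf x ≥ x * (x⁻¹ * (-stdPdf x)) := mul_le_mul_of_nonpos_left h hx.le
    rw [← mul_assoc, mul_inv_cancel₀ hx.ne, one_mul] at this
    linarith

lemma monotone_stdCdf : Monotone stdCdf :=
  monotone_of_deriv_nonneg (fun x => (hasDerivAt_stdCdf x).differentiableAt)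
    (fun x => by rw [(hasDerivAt_stdCdf x).deriv]; exact (stdPdf_pos x).le)

lemma hasDerivAt_logCdf (x : ℝ) :
    HasDerivAt (fun y => Real.log (stdCdf y)) (stdPdf x / stdCdf x) x :=
  (hasDerivAt_stdCdf x).log (stdCdf_pos x).ne'

lemma antitone_ratio : Antitone (fun x => stdPdf x / stdCdf x) := by
  have hderiv : ∀ x : ℝ, HasDerivAt (fun y => stdPdf y / stdCdf y)
      ((-x * stdPdf x * stdCdf x - stdPdf x * stdPdf x) / (stdCdf x) ^ 2) x := by
    intro x
    exact (hasDerivAt_stdPdf x).div (hasDerivAt_stdCdf x) (stdCdf_pos x).ne'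
  apply antitone_of_deriv_nonpos (fun x => (hderiv x).differentiableAt)
  intro x
  rw [(hderiv x).deriv]
  apply div_nonpos_of_nonpos_of_nonneg _ (sq_nonneg _)
  have h := key_ineq x
  have hp := (stdPdf_pos x).le
  nlinarith

lemma concaveOn_logCdf : ConcaveOn ℝ Set.univ (fun x => Real.log (stdCdf x)) := by
  apply AntitoneOn.concaveOn_of_deriv convex_univ
  · exact fun x _ => ((hasDerivAt_logCdf x).continuousAt).continuousWithinAt
  · exact fun x _ => ((hasDerivAt_logCdf x).differentiableAt).differentiableWithinAt
  · intro a _ b _ hab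
    rw [(hasDerivAt_logCdf a).deriv, (hasDerivAt_logCdf b).deriv]
    exact antitone_ratio hab

lemma sqrt_image : Real.sqrt '' Set.Ioi 0 = Set.Ioi (0:ℝ) := by
  ext y
  constructor
  · rintro ⟨x, hx, rfl⟩
    exact Real.sqrt_pos.2 hx
  · intro hy
    exact ⟨y ^ 2, Set.mem_Ioi.mpr (pow_pos hy 2), by rw [Real.sqrt_sq (le_of_lt hy)]⟩

/-- x ↦ log Φ(√x) is concave on (0, ∞). -/
theorem stmt_13 :
    ConcaveOn ℝ (Set.Ioi (0 : ℝ)) (fun x => Real.log (stdCdf (Real.sqrt x))) := by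
  have hcomp : ConcaveOn ℝ (Set.Ioi (0:ℝ)) ((fun y => Real.log (stdCdf y)) ∘ Real.sqrt) := by
    apply ConcaveOn.comp
    · rw [sqrt_image]
      exact concaveOn_logCdf.subset (Set.subset_univ _) (convex_Ioi 0)
    · exact (Real.strictConcaveOn_sqrt.concaveOn).subset
        (Set.Ioi_subset_Ici le_rfl) (convex_Ioi 0)
    · intro a _ b _ hab
      exact Real.log_le_log (stdCdf_pos a) (monotone_stdCdf hab)
  exact hcomp
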